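/- Let A = KQ/I be a skew-gentle algebra over an algebraically closed field K of characteristic ≠ 2, with admissible presentation A^sg and auxiliary gentle algebra A'. Then a cycle C in the trivial extension T(A') is elementary if and only if every induced cycle ᵋCᵋ in the sg-quiver Q^sg_{T(A')} is an elementary cycle in T(A^sg), for all ε ∈ {+,−,∅}. -/

import Mathlib

open scoped Classical
noncomputable section

/-! ### Quivers -/

structure Quiv : Type 1 where
  V : Type
  A : Type
  src : A → V
  tgt : A → V

namespace Quiv

instance toQuiver (Q : Quiv) : Quiver Q.V :=
  ⟨fun v w => {a : Q.A // Q.src a = v ∧ Q.tgt a = w}⟩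

/-- Paths together with their endpoints. -/
def SPath (Q : Quiv) : Type := Σ v w : Q.V, Quiver.Path v w

/-- Cycles together with their base point. -/
def SCycle (Q : Quiv) : Type := Σ v : Q.V, Quiver.Path v v

/-- The length-one path given by an arrow. -/
def homOf (Q : Quiv) (a : Q.A) {v w : Q.V} (h1 : Q.src a = v) (h2 : Q.tgt a = w) :
    v ⟶ w := ⟨a, h1, h2⟩

def arrPath (Q : Quiv) (a : Q.A) : Quiver.Path (Q.src a : Q.V) (Q.tgt a) :=
  Quiver.Path.nil.cons (homOf Q a rfl rfl)

/-- The length-two path given by two composable arrows. -/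
def relPath (Q : Quiv) {a b : Q.A} (h : Q.tgt a = Q.src b) :
    Quiver.Path (Q.src a : Q.V) (Q.tgt b) :=
  (Quiver.Path.nil.cons (homOf Q a rfl rfl)).cons (homOf Q b h.symm rfl)

/-- The list of arrows of a path. -/
def arrowsOf {Q : Quiv} : {v w : Q.V} → Quiver.Path v w → List Q.A
  | _, _, .nil => []
  | _, _, .cons p e => arrowsOf p ++ [e.1]

/-- The power of a cycle. -/
def cpow {Q : Quiv} {v : Q.V} (p : Quiver.Path v v) : ℕ → Quiver.Path v v
  | 0 => Quiver.Path.nil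
  | n + 1 => (cpow p n).comp p

/-- Isomorphisms of quivers. -/
structure Iso (Q R : Quiv) where
  eV : Q.V ≃ R.V
  eA : Q.A ≃ R.A
  hsrc : ∀ a, R.src (eA a) = eV (Q.src a)
  htgt : ∀ a, R.tgt (eA a) = eV (Q.tgt a)

end Quiv

/-! ### Path algebras -/

/-- The defining relations of the path algebra of a quiver, as a quotient of the
free algebra on the vertices and the arrows. -/
inductive QRel (K : Type) [CommRing K] (Q : Quiv) :
    FreeAlgebra K (Q.V ⊕ Q.A) → FreeAlgebra K (Q.V ⊕ Q.A) → Prop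
  | idem (v : Q.V) :
      QRel K Q (FreeAlgebra.ι K (Sum.inl v) * FreeAlgebra.ι K (Sum.inl v))
        (FreeAlgebra.ι K (Sum.inl v))
  | orth {v w : Q.V} (h : v ≠ w) :
      QRel K Q (FreeAlgebra.ι K (Sum.inl v) * FreeAlgebra.ι K (Sum.inl w)) 0
  | src (a : Q.A) :
      QRel K Q (FreeAlgebra.ι K (Sum.inl (Q.src a)) * FreeAlgebra.ι K (Sum.inr a))
        (FreeAlgebra.ι K (Sum.inr a))
  | tgt (a : Q.A) :
      QRel K Q (FreeAlgebra.ι K (Sum.inr a) * FreeAlgebra.ι K (Sum.inl (Q.tgt a)))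
        (FreeAlgebra.ι K (Sum.inr a))

variable (K : Type) [CommRing K]

/-- The (non-unital, formally unitalized) path algebra of a quiver. -/
def RawPathAlg (Q : Quiv) : Type := RingQuot (QRel K Q)

instance (Q : Quiv) : Ring (RawPathAlg K Q) := inferInstanceAs (Ring (RingQuot _))
instance (Q : Quiv) : Algebra K (RawPathAlg K Q) := inferInstanceAs (Algebra K (RingQuot _))

/-- The element of the path algebra given by (the idempotent at) a vertex. -/
def vtx {Q : Quiv} (v : Q.V) : RawPathAlg K Q :=
  RingQuot.mkAlgHom K (QRel K Q) (FreeAlgebra.ι K (Sum.inl v))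

/-- The element of the path algebra given by an arrow. -/
def arrel {Q : Quiv} (a : Q.A) : RawPathAlg K Q :=
  RingQuot.mkAlgHom K (QRel K Q) (FreeAlgebra.ι K (Sum.inr a))

/-- The element of the path algebra given by a path. -/
def pElem {Q : Quiv} : {v w : Q.V} → Quiver.Path v w → RawPathAlg K Q
  | v, _, .nil => vtx K v
  | _, _, .cons p e => pElem p * arrel K e.1

/-- The quotient of the path algebra by the two-sided ideal generated by a set `G`. -/
def RawBound (Q : Quiv) (G : Set (RawPathAlg K Q)) : Type :=
  RingQuot (fun x y : RawPathAlg K Q => x ∈ G ∧ y = 0)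

instance (Q : Quiv) (G : Set (RawPathAlg K Q)) : Ring (RawBound K Q G) :=
  inferInstanceAs (Ring (RingQuot _))
instance (Q : Quiv) (G : Set (RawPathAlg K Q)) : Algebra K (RawBound K Q G) :=
  inferInstanceAs (Algebra K (RingQuot _))

/-- The quotient map onto the bound quiver algebra. -/
def toB {Q : Quiv} (G : Set (RawPathAlg K Q)) : RawPathAlg K Q →ₐ[K] RawBound K Q G :=
  RingQuot.mkAlgHom K _

def vtxB {Q : Quiv} (G : Set (RawPathAlg K Q)) (v : Q.V) : RawBound K Q G :=
  toB K G (vtx K v)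

lemma vtx_mul_self {Q : Quiv} (v : Q.V) : vtx K (Q := Q) v * vtx K v = vtx K v := by
  have h := RingQuot.mkAlgHom_rel K (QRel.idem (K := K) (Q := Q) v)
  rw [map_mul] at h
  exact h

lemma vtx_mul_orth {Q : Quiv} {v w : Q.V} (h : v ≠ w) : vtx K (Q := Q) v * vtx K w = 0 := by
  have h' := RingQuot.mkAlgHom_rel K (QRel.orth (K := K) (Q := Q) h)
  rw [map_mul, map_zero] at h'
  exact h'

lemma vtxB_mul_self {Q : Quiv} (G : Set (RawPathAlg K Q)) (v : Q.V) :
    vtxB K G v * vtxB K G v = vtxB K G v := by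
  rw [vtxB, ← map_mul, vtx_mul_self]

lemma vtxB_mul_orth {Q : Quiv} (G : Set (RawPathAlg K Q)) {v w : Q.V} (h : v ≠ w) :
    vtxB K G v * vtxB K G w = 0 := by
  simp only [vtxB]
  rw [← map_mul, vtx_mul_orth K h, map_zero]

/-- The sum of the vertex idempotents over a finite set of vertices. -/
def idemS {Q : Quiv} (G : Set (RawPathAlg K Q)) (S : Finset Q.V) : RawBound K Q G :=
  ∑ v ∈ S, vtxB K G v

lemma idemS_idem {Q : Quiv} (G : Set (RawPathAlg K Q)) (S : Finset Q.V) :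
    idemS K G S * idemS K G S = idemS K G S := by
  rw [idemS, Finset.sum_mul_sum]
  refine Finset.sum_congr rfl fun v hv => ?_
  rw [Finset.sum_eq_single_of_mem v hv]
  · exact vtxB_mul_self K G v
  · exact fun w _ hne => vtxB_mul_orth K G fun h => hne h.symm

/-- The corner of the bound quiver algebra given by an idempotent `idemS K G S`,
as a `K`-submodule. -/
def cornerSub {Q : Quiv} (G : Set (RawPathAlg K Q)) (S : Finset Q.V) :
    Submodule K (RawBound K Q G) where
  carrier := {x | idemS K G S * x = x ∧ x * idemS K G S = x}
  add_mem' := fun ha hb => ⟨by rw [mul_add, ha.1, hb.1], by rw [add_mul, ha.2, hb.2]⟩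
  zero_mem' := ⟨mul_zero _, zero_mul _⟩
  smul_mem' := fun c x hx => ⟨by rw [mul_smul_comm, hx.1], by rw [smul_mul_assoc, hx.2]⟩

/-- The corner algebra `e (kQ/I) e` where `e` is the sum of the vertex idempotents over `S`. -/
def CAlgS {Q : Quiv} (G : Set (RawPathAlg K Q)) (S : Finset Q.V) : Type :=
  ↥(cornerSub K G S)

namespace CAlgS

variable {Q : Quiv} (G : Set (RawPathAlg K Q)) (S : Finset Q.V)

instance : AddCommGroup (CAlgS K G S) := inferInstanceAs (AddCommGroup ↥(cornerSub K G S))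
instance : Module K (CAlgS K G S) := inferInstanceAs (Module K ↥(cornerSub K G S))

lemma mem_corner {x : RawBound K Q G} :
    x ∈ cornerSub K G S ↔ idemS K G S * x = x ∧ x * idemS K G S = x := Iff.rfl

instance : Mul (CAlgS K G S) :=
  ⟨fun x y => ⟨x.1 * y.1,
    ⟨by rw [← mul_assoc, ((mem_corner K G S).mp x.2).1],
     by rw [mul_assoc, ((mem_corner K G S).mp y.2).2]⟩⟩⟩

@[simp] lemma coe_mul (x y : CAlgS K G S) : (x * y).1 = x.1 * y.1 := rfl

instance : One (CAlgS K G S) := ⟨⟨idemS K G S, idemS_idem K G S, idemS_idem K G S⟩⟩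

@[simp] lemma coe_one : (1 : CAlgS K G S).1 = idemS K G S := rfl

instance : Ring (CAlgS K G S) :=
  { (inferInstance : AddCommGroup (CAlgS K G S)),
    (inferInstance : Mul (CAlgS K G S)),
    (inferInstance : One (CAlgS K G S)) with
    mul_assoc := fun x y z => Subtype.ext (mul_assoc x.1 y.1 z.1)
    one_mul := fun x => Subtype.ext ((mem_corner K G S).mp x.2).1
    mul_one := fun x => Subtype.ext ((mem_corner K G S).mp x.2).2
    left_distrib := fun x y z => Subtype.ext (mul_add x.1 y.1 z.1)
    right_distrib := fun x y z => Subtype.ext (add_mul x.1 y.1 z.1)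
    zero_mul := fun x => Subtype.ext (zero_mul x.1)
    mul_zero := fun x => Subtype.ext (mul_zero x.1) }

instance : Algebra K (CAlgS K G S) :=
  Algebra.ofModule (fun r x y => Subtype.ext (smul_mul_assoc r x.1 y.1))
    (fun r x y => Subtype.ext (mul_smul_comm r x.1 y.1))

end CAlgS

/-- The compression `e x e` of an element of the bound quiver algebra into the corner. -/
def embC {Q : Quiv} (G : Set (RawPathAlg K Q)) (S : Finset Q.V) (x : RawBound K Q G) :
    CAlgS K G S :=
  ⟨idemS K G S * x * idemS K G S,
    ⟨by rw [← mul_assoc, ← mul_assoc, idemS_idem], by rw [mul_assoc, idemS_idem]⟩⟩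
/-! ### Bound quiver presentations -/

/-- The generating set of the ideal of a bound quiver presentation, given by
a set of monomial (path) relations and a set of commutativity relations. -/
def gensOf {Q : Quiv} (Gm : Set (Quiv.SPath Q)) (Gc : Set (Quiv.SPath Q × Quiv.SPath Q)) :
    Set (RawPathAlg K Q) :=
  {x | ∃ p ∈ Gm, x = pElem K p.2.2} ∪
  {x | ∃ pq ∈ Gc, x = pElem K pq.1.2.2 - pElem K pq.2.2.2}

/-- A presentation of an algebra by a finite quiver, a set of monomial relations and
a set of commutativity relations. -/
structure Pres : Type 1 where
  Q : Quiv
  fV : Fintype Q.V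
  Gmono : Set (Quiv.SPath Q)
  Gcomm : Set (Quiv.SPath Q × Quiv.SPath Q)

namespace Pres

variable (P : Pres)

def gens : Set (RawPathAlg K P.Q) := gensOf K P.Gmono P.Gcomm

def univV : Finset P.Q.V := @Finset.univ _ P.fV

/-- The bound quiver algebra of a presentation. -/
def alg : Type := CAlgS K (P.gens K) P.univV

instance : Ring (P.alg K) := inferInstanceAs (Ring (CAlgS K (P.gens K) P.univV))
instance : Algebra K (P.alg K) := inferInstanceAs (Algebra K (CAlgS K (P.gens K) P.univV))

/-- The element of the bound quiver algebra determined by a path. -/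
def pz (p : Quiv.SPath P.Q) : P.alg K :=
  embC K (P.gens K) P.univV (toB K (P.gens K) (pElem K p.2.2))

/-- The element of the bound quiver algebra determined by an arrow. -/
def az (a : P.Q.A) : P.alg K :=
  embC K (P.gens K) P.univV (toB K (P.gens K) (arrel K a))

/-- A path is maximal if it is nonzero and killed by all arrows on both sides. -/
def IsMaximal (p : Quiv.SPath P.Q) : Prop :=
  P.pz K p ≠ 0 ∧ ∀ a : P.Q.A, P.pz K p * P.az K a = 0 ∧ P.az K a * P.pz K p = 0

/-- The ideal of relations of a presentation is admissible. -/
def Admissible : Prop :=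
  (∃ m, 2 ≤ m ∧ ∀ p : Quiv.SPath P.Q, m ≤ p.2.2.length → P.pz K p = 0) ∧
  P.gens K ⊆ Submodule.span K
    {x | ∃ p : Quiv.SPath P.Q, 2 ≤ p.2.2.length ∧ x = pElem K p.2.2}

end Pres

/-- The socle of the algebra of a presentation as a bimodule, i.e. the set of elements
killed by the (arrow) radical on both sides. -/
def socSub (P : Pres) : Submodule K (P.alg K) where
  carrier := {x | ∀ a : P.Q.A, P.az K a * x = 0 ∧ x * P.az K a = 0}
  add_mem' := fun ha hb => fun a => ⟨by rw [mul_add, (ha a).1, (hb a).1, add_zero],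
    by rw [add_mul, (ha a).2, (hb a).2, add_zero]⟩
  zero_mem' := fun a => ⟨mul_zero _, zero_mul _⟩
  smul_mem' := fun c x hx => fun a => ⟨by rw [mul_smul_comm, (hx a).1, smul_zero],
    by rw [smul_mul_assoc, (hx a).2, smul_zero]⟩

/-! ### The sg-construction (duplication of distinguished vertices) -/

/-- Vertices of the sg-quiver : distinguished vertices are doubled (carry a sign),
the other ones are not. -/
def sgV (Q : Quiv) (Sp : Set Q.V) : Type := {p : Q.V × Bool // p.1 ∈ Sp ∨ p.2 = false}

/-- Arrows of the sg-quiver. -/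
def sgA (Q : Quiv) (Sp : Set Q.V) : Type :=
  {t : Q.A × Bool × Bool // (Q.src t.1 ∈ Sp ∨ t.2.1 = false) ∧ (Q.tgt t.1 ∈ Sp ∨ t.2.2 = false)}

/-- The sg-quiver of a quiver with a set of distinguished vertices. -/
def sgQuiv (Q : Quiv) (Sp : Set Q.V) : Quiv where
  V := sgV Q Sp
  A := sgA Q Sp
  src := fun t => ⟨(Q.src t.1.1, t.1.2.1), t.2.1⟩
  tgt := fun t => ⟨(Q.tgt t.1.1, t.1.2.2), t.2.2⟩

def sgFintypeV (Q : Quiv) (fV : Fintype Q.V) (Sp : Set Q.V) : Fintype (sgV Q Sp) := by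
  classical
  letI := fV
  exact Subtype.fintype _

/-- The projection from the sg-quiver back to the original quiver. -/
def sgProj (Q : Quiv) (Sp : Set Q.V) : (sgQuiv Q Sp).V ⥤q Q.V where
  obj := fun v => v.1.1
  map := fun {x y} e =>
    ⟨e.1.1.1, congrArg (fun z : sgV Q Sp => z.1.1) e.2.1,
      congrArg (fun z : sgV Q Sp => z.1.1) e.2.2⟩

/-- `phat` is a lift of `p` through the sg-construction. -/
def IsLiftOf {Q : Quiv} {Sp : Set Q.V} {x y : (sgQuiv Q Sp).V} {v w : Q.V}
    (phat : Quiver.Path x y) (p : Quiver.Path v w) : Prop :=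
  (sgProj Q Sp).obj x = v ∧ (sgProj Q Sp).obj y = w ∧
    HEq ((sgProj Q Sp).mapPath phat) p

/-- Type (a) commutativity relations of the sg-construction: for every length-two path
through a distinguished vertex, the two lifts through the two copies of the middle vertex
are identified. -/
def sgCommA (Q : Quiv) (Sp : Set Q.V) :
    Set (Quiv.SPath (sgQuiv Q Sp) × Quiv.SPath (sgQuiv Q Sp)) :=
  {pq | ∃ (a b : Q.A) (h : Q.tgt a = Q.src b), Q.tgt a ∈ Sp ∧
    pq.1.1 = pq.2.1 ∧ pq.1.2.1 = pq.2.2.1 ∧ pq.1 ≠ pq.2 ∧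
    IsLiftOf pq.1.2.2 (Quiv.relPath Q h) ∧ IsLiftOf pq.2.2.2 (Quiv.relPath Q h)}

/-- Type (b) commutativity relations: differences of lifts of distinguished cycles starting at
the same non-distinguished vertex. -/
def sgCommB (Q : Quiv) (Sp : Set Q.V) (cyc : Set (Quiv.SCycle Q)) :
    Set (Quiv.SPath (sgQuiv Q Sp) × Quiv.SPath (sgQuiv Q Sp)) :=
  {pq | ∃ C₁ ∈ cyc, ∃ C₂ ∈ cyc, C₁.1 = C₂.1 ∧ C₁.1 ∉ Sp ∧
    pq.1.1 = pq.2.1 ∧ pq.1.2.1 = pq.2.2.1 ∧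
    IsLiftOf pq.1.2.2 C₁.2 ∧ IsLiftOf pq.2.2.2 C₂.2}

/-- Type (c) monomial relations: all lifts of the monomial relations. -/
def sgMonoC (Q : Quiv) (Sp : Set Q.V) (Gm : Set (Quiv.SPath Q)) :
    Set (Quiv.SPath (sgQuiv Q Sp)) :=
  {phat | ∃ p ∈ Gm, IsLiftOf phat.2.2 p.2.2}

/-- Type (d) monomial relations: sign-mismatched lifts of distinguished cycles based at a
distinguished vertex. -/
def sgMonoD (Q : Quiv) (Sp : Set Q.V) (cyc : Set (Quiv.SCycle Q)) :
    Set (Quiv.SPath (sgQuiv Q Sp)) :=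
  {phat | ∃ C ∈ cyc, C.1 ∈ Sp ∧ IsLiftOf phat.2.2 C.2 ∧ phat.1 ≠ phat.2.1}

/-- The sg-bound quiver presentation associated to a tuple `(Q, I, Sp, cyc)` where the
ideal `I` is generated by the monomial relations `Gm` and the differences of the
distinguished cycles `cyc`. -/
def sgPres (Q : Quiv) (fV : Fintype Q.V) (Gm : Set (Quiv.SPath Q)) (Sp : Set Q.V)
    (cyc : Set (Quiv.SCycle Q)) : Pres where
  Q := sgQuiv Q Sp
  fV := sgFintypeV Q fV Sp
  Gmono := sgMonoC Q Sp Gm ∪ sgMonoD Q Sp cyc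
  Gcomm := sgCommA Q Sp ∪ sgCommB Q Sp cyc
/-! ### Gentle and skew-gentle presentations -/

/-- A list of arrows contains two consecutive arrows forming a relation. -/
def ContainsRelPair (Q : Quiv) (rel : Set (Q.A × Q.A)) (l : List Q.A) : Prop :=
  ∃ (l₁ l₂ : List Q.A) (a b : Q.A), (a, b) ∈ rel ∧ l = l₁ ++ a :: b :: l₂

/-- The combinatorial conditions defining a gentle bound quiver. -/
structure GentleConds (Q : Quiv) (rel : Set (Q.A × Q.A)) : Prop where
  comp : ∀ r ∈ rel, Q.tgt r.1 = Q.src r.2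
  two_out : ∀ v, {a : Q.A | Q.src a = v}.ncard ≤ 2
  two_in : ∀ v, {a : Q.A | Q.tgt a = v}.ncard ≤ 2
  uniq_rel_post : ∀ a : Q.A, {b | Q.tgt a = Q.src b ∧ (a, b) ∈ rel}.ncard ≤ 1
  uniq_nonrel_post : ∀ a : Q.A, {b | Q.tgt a = Q.src b ∧ (a, b) ∉ rel}.ncard ≤ 1
  uniq_rel_pre : ∀ b : Q.A, {a | Q.tgt a = Q.src b ∧ (a, b) ∈ rel}.ncard ≤ 1
  uniq_nonrel_pre : ∀ b : Q.A, {a | Q.tgt a = Q.src b ∧ (a, b) ∉ rel}.ncard ≤ 1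
  admissible : ∃ m, 2 ≤ m ∧ ∀ p : Quiv.SPath Q, m ≤ p.2.2.length →
    ContainsRelPair Q rel (Quiv.arrowsOf p.2.2)

/-- A presentation of a gentle algebra: a finite quiver together with a set of
length-two zero relations satisfying the gentle conditions. -/
structure GentlePres : Type 1 where
  Q : Quiv
  fV : Fintype Q.V
  fA : Fintype Q.A
  rel : Set (Q.A × Q.A)
  gentle : GentleConds Q rel

namespace GentlePres

variable (GP : GentlePres)

/-- The set of paths of length two corresponding to the relations. -/
def relPaths : Set (Quiv.SPath GP.Q) :=
  {p | ∃ (a b : GP.Q.A) (h : GP.Q.tgt a = GP.Q.src b),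
    (a, b) ∈ GP.rel ∧ p = ⟨_, _, Quiv.relPath GP.Q h⟩}

/-- The bound quiver presentation of a gentle algebra. -/
def pres : Pres := ⟨GP.Q, GP.fV, GP.relPaths, ∅⟩

end GentlePres

/-- A presentation of a skew-gentle algebra: a quiver with a set of special loops and a set
of length-two relations among the other arrows, such that the non-special part is gentle and
the conditions at special vertices hold. -/
structure SkewGentlePres : Type 1 where
  Q : Quiv
  fV : Fintype Q.V
  fA : Fintype Q.A
  special : Set Q.A
  rel : Set (Q.A × Q.A)
  special_loop : ∀ f ∈ special, Q.src f = Q.tgt f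
  rel_comp : ∀ r ∈ rel, Q.tgt r.1 = Q.src r.2
  rel_not_special : ∀ r ∈ rel, r.1 ∉ special ∧ r.2 ∉ special
  two_out : ∀ v, {a : Q.A | a ∉ special ∧ Q.src a = v}.ncard ≤ 2
  two_in : ∀ v, {a : Q.A | a ∉ special ∧ Q.tgt a = v}.ncard ≤ 2
  uniq_rel_post : ∀ a : Q.A, {b | b ∉ special ∧ Q.tgt a = Q.src b ∧ (a, b) ∈ rel}.ncard ≤ 1
  uniq_nonrel_post : ∀ a : Q.A, a ∉ special →
    {b | b ∉ special ∧ Q.tgt a = Q.src b ∧ (a, b) ∉ rel}.ncard ≤ 1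
  uniq_rel_pre : ∀ b : Q.A, {a | a ∉ special ∧ Q.tgt a = Q.src b ∧ (a, b) ∈ rel}.ncard ≤ 1
  uniq_nonrel_pre : ∀ b : Q.A, b ∉ special →
    {a | a ∉ special ∧ Q.tgt a = Q.src b ∧ (a, b) ∉ rel}.ncard ≤ 1
  admissible : ∃ m, 2 ≤ m ∧ ∀ p : Quiv.SPath Q,
    (∀ a ∈ Quiv.arrowsOf p.2.2, a ∉ special) → m ≤ p.2.2.length →
    ContainsRelPair Q rel (Quiv.arrowsOf p.2.2)
  sp_out : ∀ f ∈ special, {a : Q.A | a ∉ special ∧ Q.src a = Q.src f}.ncard ≤ 1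
  sp_in : ∀ f ∈ special, {a : Q.A | a ∉ special ∧ Q.tgt a = Q.src f}.ncard ≤ 1
  sp_incident : ∀ f ∈ special,
    1 ≤ {a : Q.A | a ∉ special ∧ (Q.src a = Q.src f ∨ Q.tgt a = Q.src f)}.ncard
  sp_through : ∀ f ∈ special, ∀ a b : Q.A, a ∉ special → b ∉ special →
    Q.tgt a = Q.src f → Q.src b = Q.src f → (a, b) ∈ rel
  sp_no_other_loop : ∀ f ∈ special, ∀ g : Q.A,
    Q.src g = Q.src f → Q.tgt g = Q.src f → g = f

namespace SkewGentlePres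

variable (SG : SkewGentlePres)

/-- The set of special vertices. -/
def Sp : Set SG.Q.V := {x | ∃ f ∈ SG.special, SG.Q.src f = x}

/-- The quiver of the auxiliary gentle algebra: the special loops are removed. -/
def Qaux : Quiv :=
  ⟨SG.Q.V, {a : SG.Q.A // a ∉ SG.special},
    fun a => SG.Q.src a.1, fun a => SG.Q.tgt a.1⟩

/-- The relations of the auxiliary gentle algebra: the length-two relations not passing
through a special vertex. -/
def auxRelPaths : Set (Quiv.SPath SG.Qaux) :=
  {p | ∃ (a b : SG.Qaux.A) (h : SG.Qaux.tgt a = SG.Qaux.src b),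
    (a.1, b.1) ∈ SG.rel ∧ SG.Q.tgt a.1 ∉ SG.Sp ∧ p = ⟨_, _, Quiv.relPath SG.Qaux h⟩}

/-- The presentation of the auxiliary gentle algebra `A'`. -/
def auxPres : Pres := ⟨SG.Qaux, SG.fV, SG.auxRelPaths, ∅⟩

/-- All length-two relations, as paths in `Q`. -/
def fullRelPaths : Set (Quiv.SPath SG.Q) :=
  {p | ∃ (a b : SG.Q.A) (h : SG.Q.tgt a = SG.Q.src b),
    (a, b) ∈ SG.rel ∧ p = ⟨_, _, Quiv.relPath SG.Q h⟩}

/-- The relations `f² - f` for the special loops, as pairs of parallel paths. -/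
def loopPairs : Set (Quiv.SPath SG.Q × Quiv.SPath SG.Q) :=
  {pq | ∃ f ∈ SG.special, ∃ h : SG.Q.tgt f = SG.Q.src f,
    pq = (⟨_, _, Quiv.relPath SG.Q (a := f) (b := f) h⟩, ⟨_, _, Quiv.arrPath SG.Q f⟩)}

/-- The (non-admissible) presentation of the skew-gentle algebra `A` itself. -/
def pres : Pres := ⟨SG.Q, SG.fV, SG.fullRelPaths, SG.loopPairs⟩

/-- The admissible presentation `A^sg` of the skew-gentle algebra: the sg-bound quiver
presentation of the auxiliary gentle presentation with the special vertices as
distinguished vertices. -/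
def asgPres : Pres := sgPres SG.Qaux SG.fV SG.auxRelPaths SG.Sp ∅

/-- A path of `Q` is `sp`-maximal if it is nonzero, killed on both sides by all
non-special arrows, and starts (resp. ends) with the special loop whenever its source
(resp. target) is a special vertex. -/
def IsSpMaximal (p : Quiv.SPath SG.Q) : Prop :=
  SG.pres.pz K p ≠ 0 ∧
  (∀ a : SG.Q.A, a ∉ SG.special →
    SG.pres.pz K p * SG.pres.az K a = 0 ∧ SG.pres.az K a * SG.pres.pz K p = 0) ∧
  (p.1 ∈ SG.Sp → ∃ f ∈ SG.special, SG.Q.src f = p.1 ∧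
    (Quiv.arrowsOf p.2.2).head? = some f) ∧
  (p.2.1 ∈ SG.Sp → ∃ f ∈ SG.special, SG.Q.src f = p.2.1 ∧
    (Quiv.arrowsOf p.2.2).getLast? = some f)

end SkewGentlePres
/-! ### The trivial extension of an algebra -/

/-- The dual `D(A) = Hom_K(A, K)` of an algebra, regarded as an `A`-bimodule. -/
def DualBimod (A : Type) [Ring A] [Algebra K A] : Type := A →ₗ[K] K

namespace DualBimod

variable {K}
variable {A : Type} [Ring A] [Algebra K A]

instance : AddCommGroup (DualBimod K A) := inferInstanceAs (AddCommGroup (A →ₗ[K] K))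
instance : Module K (DualBimod K A) := inferInstanceAs (Module K (A →ₗ[K] K))

/-- The underlying linear form of a dual element. -/
def toL : DualBimod K A → (A →ₗ[K] K) := id

instance : Module A (DualBimod K A) where
  smul a f := (toL f).comp (LinearMap.mulRight K a)
  one_smul f := LinearMap.ext fun x => by
    show toL f (x * 1) = toL f x
    rw [mul_one]
  mul_smul a b f := LinearMap.ext fun x => by
    show toL f (x * (a * b)) = toL f ((x * a) * b)
    rw [mul_assoc]
  smul_zero a := LinearMap.ext fun x => rfl
  smul_add a f g := LinearMap.ext fun x => rfl
  add_smul a b f := LinearMap.ext fun x => by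
    show toL f (x * (a + b)) = toL f (x * a) + toL f (x * b)
    rw [mul_add, map_add]
  zero_smul f := LinearMap.ext fun x => by
    show toL f (x * 0) = 0
    rw [mul_zero, map_zero]

lemma smul_def (a : A) (f : DualBimod K A) (x : A) :
    toL (a • f) x = toL f (x * a) := rfl

instance : Module Aᵐᵒᵖ (DualBimod K A) where
  smul a f := (toL f).comp (LinearMap.mulLeft K a.unop)
  one_smul f := LinearMap.ext fun x => by
    show toL f (1 * x) = toL f x
    rw [one_mul]
  mul_smul a b f := LinearMap.ext fun x => by
    show toL f ((b.unop * a.unop) * x) = toL f (b.unop * (a.unop * x))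
    rw [mul_assoc]
  smul_zero a := LinearMap.ext fun x => rfl
  smul_add a f g := LinearMap.ext fun x => rfl
  add_smul a b f := LinearMap.ext fun x => by
    show toL f ((a.unop + b.unop) * x) = toL f (a.unop * x) + toL f (b.unop * x)
    rw [add_mul, map_add]
  zero_smul f := LinearMap.ext fun x => by
    show toL f (0 * x) = 0
    rw [zero_mul, map_zero]

lemma op_smul_def (a : Aᵐᵒᵖ) (f : DualBimod K A) (x : A) :
    toL (a • f) x = toL f (a.unop * x) := rfl

instance : SMulCommClass A Aᵐᵒᵖ (DualBimod K A) where
  smul_comm a b f := LinearMap.ext fun x => by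
    show toL f (b.unop * (x * a)) = toL f ((b.unop * x) * a)
    rw [mul_assoc]

instance : IsScalarTower K A (DualBimod K A) where
  smul_assoc k a f := LinearMap.ext fun x => by
    show toL f (x * (k • a)) = k • toL f (x * a)
    rw [mul_smul_comm, map_smul]

instance : IsScalarTower K Aᵐᵒᵖ (DualBimod K A) where
  smul_assoc k a f := LinearMap.ext fun x => by
    show toL f ((k • a).unop * x) = k • toL f (a.unop * x)
    rw [MulOpposite.unop_smul, smul_mul_assoc, map_smul]

end DualBimod

/-- The trivial extension `T(A) = A ⋉ D(A)` of an algebra: the vector space `A ⊕ DA`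
with multiplication `(a,f)(b,g) = (ab, ag + fb)`. -/
def TrivExt (A : Type) [Ring A] [Algebra K A] : Type :=
  TrivSqZeroExt A (DualBimod K A)

instance (A : Type) [Ring A] [Algebra K A] : Ring (TrivExt K A) :=
  inferInstanceAs (Ring (TrivSqZeroExt A (DualBimod K A)))

instance (A : Type) [Ring A] [Algebra K A] : Algebra K (TrivExt K A) :=
  inferInstanceAs (Algebra K (TrivSqZeroExt A (DualBimod K A)))
/-! ### The quiver and relations of the trivial extension of a bound quiver algebra -/

/-- Maximal paths of a presentation. -/
def MaxPathT (P : Pres) : Type := {p : Quiv.SPath P.Q // P.IsMaximal K p}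

/-- Two maximal paths are equivalent when they have the same endpoints and are equal as
elements of the algebra (so the equivalence classes are the socle basis elements given by
the maximal paths). -/
def maxSetoid (P : Pres) : Setoid (MaxPathT K P) where
  r p q := p.1.1 = q.1.1 ∧ p.1.2.1 = q.1.2.1 ∧ P.pz K p.1 = P.pz K q.1
  iseqv := ⟨fun _ => ⟨rfl, rfl, rfl⟩,
    fun h => ⟨h.1.symm, h.2.1.symm, h.2.2.symm⟩,
    fun h h' => ⟨h.1.trans h'.1, h.2.1.trans h'.2.1, h.2.2.trans h'.2.2⟩⟩

/-- The classes of maximal paths of a presentation. -/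
def MaxClass (P : Pres) : Type := Quotient (maxSetoid K P)

/-- The source of a class of maximal paths. -/
def MaxClass.s {P : Pres} (c : MaxClass K P) : P.Q.V :=
  @Quotient.lift _ _ (maxSetoid K P) (fun p => p.1.1) (fun _ _ h => h.1) c

/-- The target of a class of maximal paths. -/
def MaxClass.t {P : Pres} (c : MaxClass K P) : P.Q.V :=
  @Quotient.lift _ _ (maxSetoid K P) (fun p => p.1.2.1) (fun _ _ h => h.2.1) c

/-- The quiver of the trivial extension of a bound quiver algebra: one new arrow
`β_p : t(p) → s(p)` for each (class of) maximal path `p`. -/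
def trivQuiv (P : Pres) : Quiv where
  V := P.Q.V
  A := P.Q.A ⊕ MaxClass K P
  src := Sum.elim P.Q.src (fun c => c.t)
  tgt := Sum.elim P.Q.tgt (fun c => c.s)

/-- The inclusion of the original quiver in the quiver of the trivial extension. -/
def oldEmb (P : Pres) : P.Q.V ⥤q (trivQuiv K P).V where
  obj := fun v => v
  map := fun e => ⟨Sum.inl e.1, e.2.1, e.2.2⟩

/-- An elementary cycle of the trivial extension: a cycle of the form `q ⬝ β_p` with
`p` a maximal path and `q` a path of the original quiver having nonzero weight,
i.e. `q` equals `p` in the algebra. -/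
def IsElemCycle (P : Pres) (C : Quiv.SCycle (trivQuiv K P)) : Prop :=
  ∃ (p : MaxPathT K P) (q : Quiver.Path (p.1.1 : P.Q.V) p.1.2.1),
    P.pz K ⟨p.1.1, p.1.2.1, q⟩ = P.pz K p.1 ∧
    C = ⟨p.1.1, ((oldEmb K P).mapPath q).cons
      ⟨Sum.inr (Quotient.mk (maxSetoid K P) p), rfl, rfl⟩⟩

/-- A path is contained in (a rotation of) an elementary cycle. -/
def InElemCycle (P : Pres) {v w : (trivQuiv K P).V} (p : Quiver.Path v w) : Prop :=
  ∃ C, IsElemCycle K P C ∧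
    (Quiv.arrowsOf p) <:+: (Quiv.arrowsOf C.2 ++ Quiv.arrowsOf C.2)

/-- The monomial relations of the trivial extension: the original monomial relations,
the paths not contained in any elementary cycle, and the paths `C ⬝ α` with `C` an
elementary cycle and `α` its first arrow. -/
def trivGmono (P : Pres) : Set (Quiv.SPath (trivQuiv K P)) :=
  {p | ∃ p₀ ∈ P.Gmono, p = ⟨p₀.1, p₀.2.1, (oldEmb K P).mapPath p₀.2.2⟩} ∪
  {p | 1 ≤ p.2.2.length ∧ ¬ InElemCycle K P p.2.2} ∪
  {p | ∃ C, IsElemCycle K P C ∧ ∃ (w : (trivQuiv K P).V) (r : Quiver.Path C.1 w),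
      r.length = 1 ∧ (Quiv.arrowsOf r) <+: (Quiv.arrowsOf C.2) ∧ p = ⟨C.1, w, C.2.comp r⟩}

/-- The commutativity relations of the trivial extension: the original ones and the
differences of elementary cycles starting at the same vertex. -/
def trivGcomm (P : Pres) :
    Set (Quiv.SPath (trivQuiv K P) × Quiv.SPath (trivQuiv K P)) :=
  {pq | ∃ q₀ ∈ P.Gcomm,
    pq = (⟨q₀.1.1, q₀.1.2.1, (oldEmb K P).mapPath q₀.1.2.2⟩,
          ⟨q₀.2.1, q₀.2.2.1, (oldEmb K P).mapPath q₀.2.2.2⟩)} ∪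
  {pq | ∃ C₁ C₂, IsElemCycle K P C₁ ∧ IsElemCycle K P C₂ ∧ C₁.1 = C₂.1 ∧
    pq = (⟨C₁.1, C₁.1, C₁.2⟩, ⟨C₂.1, C₂.1, C₂.2⟩)}

/-- The bound quiver presentation of the trivial extension of a bound quiver algebra. -/
def trivPres (P : Pres) : Pres :=
  ⟨trivQuiv K P, P.fV, trivGmono K P, trivGcomm K P⟩

/-! ### Admissible cuts and cut sets -/

/-- An admissible cut of the trivial extension: a set of arrows consisting of exactly one
arrow of each elementary cycle. -/
def IsAdmissibleCut (P : Pres) (D : Set (trivQuiv K P).A) : Prop :=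
  (∀ a ∈ D, ∃ C, IsElemCycle K P C ∧ a ∈ Quiv.arrowsOf C.2) ∧
  (∀ C, IsElemCycle K P C →
    ((Quiv.arrowsOf C.2).countP (fun a => decide (a ∈ D))) = 1)

/-- A cut set of the trivial extension with respect to the elementary cycles: a set of
arrows containing exactly one arrow of each elementary cycle, appearing exactly once in it. -/
def IsCutSet (P : Pres) (D : Set (trivQuiv K P).A) : Prop :=
  ∀ C, IsElemCycle K P C →
    ((Quiv.arrowsOf C.2).countP (fun a => decide (a ∈ D))) = 1

/-- The presentation of the quotient of the trivial extension by the ideal generated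
by a set of arrows `D`. -/
def cutPres (P : Pres) (D : Set (trivQuiv K P).A) : Pres :=
  ⟨trivQuiv K P, P.fV,
    trivGmono K P ∪ {p | ∃ a ∈ D, p = ⟨_, _, Quiv.arrPath (trivQuiv K P) a⟩},
    trivGcomm K P⟩

/-! ### The repetitive algebra and reflections -/

/-- The quiver of the repetitive algebra of a bound quiver algebra: `ℤ` copies of the
original quiver, together with a connecting arrow `p̄[n] : t(p)[n] → s(p)[n+1]` for each
maximal path `p`. -/
def repQuiv (P : Pres) : Quiv where
  V := P.Q.V × ℤ
  A := (P.Q.A × ℤ) ⊕ (MaxClass K P × ℤ)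
  src := Sum.elim (fun an => (P.Q.src an.1, an.2)) (fun pn => (pn.1.t, pn.2))
  tgt := Sum.elim (fun an => (P.Q.tgt an.1, an.2)) (fun pn => (pn.1.s, pn.2 + 1))

/-- The embedding of the `n`-th copy of the quiver in the repetitive quiver. -/
def shiftEmb (P : Pres) (n : ℤ) : P.Q.V ⥤q (repQuiv K P).V where
  obj := fun v => (v, n)
  map := fun e => ⟨Sum.inl (e.1, n),
    congrArg (fun v : P.Q.V => ((v, n) : (repQuiv K P).V)) e.2.1,
    congrArg (fun v : P.Q.V => ((v, n) : (repQuiv K P).V)) e.2.2⟩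

/-- The full paths of the repetitive quiver: `p₂[n] ⬝ p̄[n] ⬝ p₁[n+1]` for maximal
paths `p = p₁ p₂`. -/
def IsFullPath (P : Pres) (F : Quiv.SPath (repQuiv K P)) : Prop :=
  ∃ (p : MaxPathT K P) (n : ℤ) (y : P.Q.V)
    (p₁ : Quiver.Path (p.1.1 : P.Q.V) y) (p₂ : Quiver.Path y p.1.2.1),
    p.1.2.2 = p₁.comp p₂ ∧
    F = ⟨(y, n), (y, n + 1),
      ((((shiftEmb K P n).mapPath p₂).cons
        ⟨Sum.inr (Quotient.mk (maxSetoid K P) p, n), rfl, rfl⟩).comp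
        ((shiftEmb K P (n + 1)).mapPath p₁))⟩

/-- The connecting path `p₃[n] ⬝ p̄[n] ⬝ p₁[n+1]` attached to a decomposition
`p = p₁ m p₃` of a maximal path. -/
def connPath (P : Pres) (p : MaxPathT K P) (n : ℤ) {a b : P.Q.V}
    (p₁ : Quiver.Path (p.1.1 : P.Q.V) a) (p₃ : Quiver.Path b p.1.2.1) :
    Quiv.SPath (repQuiv K P) :=
  ⟨(b, n), (a, n + 1),
    ((((shiftEmb K P n).mapPath p₃).cons
      ⟨Sum.inr (Quotient.mk (maxSetoid K P) p, n), rfl, rfl⟩).comp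
      ((shiftEmb K P (n + 1)).mapPath p₁))⟩

/-- The monomial relations of the repetitive algebra. -/
def repGmono (P : Pres) : Set (Quiv.SPath (repQuiv K P)) :=
  {F | ∃ n : ℤ, ∃ p ∈ P.Gmono,
    F = ⟨(p.1, n), (p.2.1, n), (shiftEmb K P n).mapPath p.2.2⟩} ∪
  {F | (∃ c, Sum.inr c ∈ Quiv.arrowsOf F.2.2) ∧
    ¬ ∃ G, IsFullPath K P G ∧ Quiv.arrowsOf F.2.2 <:+: Quiv.arrowsOf G.2.2}

/-- The commutativity relations of the repetitive algebra. -/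
def repGcomm (P : Pres) :
    Set (Quiv.SPath (repQuiv K P) × Quiv.SPath (repQuiv K P)) :=
  {pq | ∃ n : ℤ, ∃ q ∈ P.Gcomm,
    pq = (⟨(q.1.1, n), (q.1.2.1, n), (shiftEmb K P n).mapPath q.1.2.2⟩,
          ⟨(q.2.1, n), (q.2.2.1, n), (shiftEmb K P n).mapPath q.2.2.2⟩)} ∪
  {pq | ∃ (p q : MaxPathT K P) (n : ℤ) (a b : P.Q.V) (m : Quiver.Path a b)
      (p₁ : Quiver.Path (p.1.1 : P.Q.V) a) (p₃ : Quiver.Path b p.1.2.1)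
      (q₁ : Quiver.Path (q.1.1 : P.Q.V) a) (q₃ : Quiver.Path b q.1.2.1),
      p.1.2.2 = (p₁.comp m).comp p₃ ∧ q.1.2.2 = (q₁.comp m).comp q₃ ∧
      pq = (connPath K P p n p₁ p₃, connPath K P q n q₁ q₃)}

/-- The generators of the ideal of the repetitive algebra. -/
def repGens (P : Pres) : Set (RawPathAlg K (repQuiv K P)) :=
  gensOf K (repGmono K P) (repGcomm K P)

/-- The bound path algebra underlying the repetitive algebra. -/
def RepAlgRaw (P : Pres) : Type := RawBound K (repQuiv K P) (repGens K P)

/-- The slice of vertices obtained from the zero-th copy by moving the vertices in `xs`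
one step forward. -/
def negSlice (P : Pres) (xs : Finset P.Q.V) : Finset (repQuiv K P).V :=
  letI := P.fV
  ((Finset.univ \ xs).image fun v => (v, (0 : ℤ))) ∪ (xs.image fun v => (v, (1 : ℤ)))

/-- The slice of vertices obtained from the zero-th copy by moving the vertices in `xs`
one step backwards. -/
def posSlice (P : Pres) (xs : Finset P.Q.V) : Finset (repQuiv K P).V :=
  letI := P.fV
  ((Finset.univ \ xs).image fun v => (v, (0 : ℤ))) ∪ (xs.image fun v => (v, (-1 : ℤ)))

/-- The (iterated) negative reflection of a bound quiver algebra at a set of source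
vertices: the corner of the repetitive algebra on the shifted slice. -/
def reflectNeg (P : Pres) (xs : Finset P.Q.V) : Type :=
  CAlgS K (repGens K P) (negSlice K P xs)

instance (P : Pres) (xs : Finset P.Q.V) : Ring (reflectNeg K P xs) :=
  inferInstanceAs (Ring (CAlgS K (repGens K P) (negSlice K P xs)))
instance (P : Pres) (xs : Finset P.Q.V) : Algebra K (reflectNeg K P xs) :=
  inferInstanceAs (Algebra K (CAlgS K (repGens K P) (negSlice K P xs)))

/-- The (iterated) positive reflection of a bound quiver algebra at a set of sink
vertices. -/
def reflectPos (P : Pres) (xs : Finset P.Q.V) : Type :=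
  CAlgS K (repGens K P) (posSlice K P xs)

instance (P : Pres) (xs : Finset P.Q.V) : Ring (reflectPos K P xs) :=
  inferInstanceAs (Ring (CAlgS K (repGens K P) (posSlice K P xs)))
instance (P : Pres) (xs : Finset P.Q.V) : Algebra K (reflectPos K P xs) :=
  inferInstanceAs (Algebra K (CAlgS K (repGens K P) (posSlice K P xs)))

/-- The set of copies, in the sg-quiver, of a vertex `x`. -/
def sgLiftsV (Q : Quiv) (fV : Fintype Q.V) (Sp : Set Q.V) (x : Q.V) :
    Finset (sgQuiv Q Sp).V :=
  letI : Fintype (sgQuiv Q Sp).V := sgFintypeV Q fV Sp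
  Finset.univ.filter fun v => v.1.1 = x

/-- An algebra is skew-gentle if it is isomorphic to the algebra of (the admissible
presentation of) a skew-gentle presentation. -/
def IsSkewGentleAlg (B : Type) [Ring B] [Algebra K B] : Prop :=
  ∃ SG : SkewGentlePres, Nonempty (B ≃ₐ[K] (SG.asgPres).alg K)
/-! ### Skew-Brauer graphs and their algebras -/

/-- A (connected) skew-Brauer graph: a finite graph given by half-edge data, with a
multiplicity function, a cyclic ordering of the half-edges around each vertex (the
permutation `σ`), and a set of distinguished vertices of multiplicity one and valency one
adjacent to non-distinguished vertices.  When `dist = ∅` this is just a Brauer graph. -/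
structure SkewBrauerGraph : Type 1 where
  V : Type
  E : Type
  fV : Fintype V
  fE : Fintype E
  neE : Nonempty E
  vmap : E × Bool → V
  mult : V → ℕ
  mult_pos : ∀ v, 1 ≤ mult v
  σ : Equiv.Perm (E × Bool)
  σ_vmap : ∀ h, vmap (σ h) = vmap h
  σ_trans : ∀ h h', vmap h = vmap h' → ∃ n : ℕ, (σ ^ n) h = h'
  conn : ∀ v w : V, Relation.ReflTransGen
    (fun a b => ∃ h : E × Bool, vmap h = a ∧ vmap (h.1, !h.2) = b) v w
  dist : Set V
  dist_mult : ∀ v ∈ dist, mult v = 1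
  dist_val : ∀ v ∈ dist, ∃! h : E × Bool, vmap h = v
  dist_adj : ∀ v ∈ dist, ∀ h : E × Bool, vmap h = v → vmap (h.1, !h.2) ∉ dist

namespace SkewBrauerGraph

variable (Γ : SkewBrauerGraph)

instance : Fintype Γ.V := Γ.fV
instance : Fintype Γ.E := Γ.fE

/-- The valency of a vertex: the number of half-edges at it. -/
def val (v : Γ.V) : ℕ := (Finset.univ.filter fun h : Γ.E × Bool => Γ.vmap h = v).card

/-- The Brauer quiver of the graph: vertices are the edges, and each half-edge `h` gives
an arrow from its edge to the edge of `σ h`. -/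
def bQuiv : Quiv := ⟨Γ.E, Γ.E × Bool, fun h => h.1, fun h => (Γ.σ h).1⟩

/-- An edge, seen as a vertex of the Brauer quiver. -/
def bV (e : Γ.E) : Γ.bQuiv.V := e

/-- The arrow of the Brauer quiver attached to a half-edge. -/
def bArrow (h : Γ.E × Bool) : (Γ.bV h.1) ⟶ (Γ.bV (Γ.σ h).1) := ⟨h, rfl, rfl⟩

/-- The path in the Brauer quiver winding `n` steps around a vertex, starting at the
half-edge `h`. -/
def cycPath : (n : ℕ) → (h : Γ.E × Bool) →
    Quiver.Path (Γ.bV h.1) (Γ.bV (((⇑Γ.σ)^[n] h).1))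
  | 0, _ => Quiver.Path.nil
  | n + 1, h => (Quiver.Path.nil.cons (Γ.bArrow h)).comp (cycPath n (Γ.σ h))

/-- The special cycle at the vertex `vmap h` starting at the edge of `h`: one full turn
around the vertex. -/
def specCyc (h : Γ.E × Bool) : Quiver.Path (Γ.bV h.1) (Γ.bV h.1) :=
  (congrArg (fun z : Γ.E × Bool => Γ.bV z.1)
    (Function.iterate_minimalPeriod (f := ⇑Γ.σ) (x := h))) ▸
    Γ.cycPath (Function.minimalPeriod (⇑Γ.σ) h) h

/-- The distinguished vertices of the Brauer quiver: the edges incident to a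
distinguished vertex of the graph. -/
def SpE : Set Γ.bQuiv.V := {e : Γ.E | ∃ b, Γ.vmap (e, b) ∈ Γ.dist}

/-- The sg-quiver of the Brauer quiver: the quiver of the skew-Brauer graph algebra. -/
def sbQuiv : Quiv := sgQuiv Γ.bQuiv Γ.SpE

/-- `C` is an sg-special cycle at the vertex `v` of the graph: a lift through the
sg-construction of a special cycle at `v` (only defined when `mult v * val v ≥ 2`). -/
def IsSgSpecial (v : Γ.V) (C : Quiv.SCycle Γ.sbQuiv) : Prop :=
  2 ≤ Γ.mult v * Γ.val v ∧ ∃ h : Γ.E × Bool, Γ.vmap h = v ∧ IsLiftOf C.2 (Γ.specCyc h)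

/-- The type I relations: differences of the `mult`-th powers of the sg-special cycles
based at the same vertex of the quiver. -/
def sbCommI : Set (Quiv.SPath Γ.sbQuiv × Quiv.SPath Γ.sbQuiv) :=
  {pq | ∃ (v₁ v₂ : Γ.V) (y : Γ.sbQuiv.V) (C₁ C₂ : Quiver.Path y y),
    Γ.IsSgSpecial v₁ ⟨y, C₁⟩ ∧ Γ.IsSgSpecial v₂ ⟨y, C₂⟩ ∧
    pq = (⟨y, y, Quiv.cpow C₁ (Γ.mult v₁)⟩, ⟨y, y, Quiv.cpow C₂ (Γ.mult v₂)⟩)}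

/-- The type IIa relations: `C^{mult v} ⬝ α` with `α` the first arrow of the sg-special
cycle `C`. -/
def sbMonoIIa : Set (Quiv.SPath Γ.sbQuiv) :=
  {p | ∃ (v : Γ.V) (y : Γ.sbQuiv.V) (C : Quiver.Path y y) (w : Γ.sbQuiv.V)
      (r : Quiver.Path y w),
    Γ.IsSgSpecial v ⟨y, C⟩ ∧ r.length = 1 ∧ Quiv.arrowsOf r <+: Quiv.arrowsOf C ∧
    p = ⟨y, w, (Quiv.cpow C (Γ.mult v)).comp r⟩}

/-- The type IIb relations: `C^{mult v - 1} ⬝ L` where `C` is an sg-special cycle based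
at a distinguished vertex of the quiver and `L` is a sign-mismatched lift of the special
cycle at `v`. -/
def sbMonoIIb : Set (Quiv.SPath Γ.sbQuiv) :=
  {p | ∃ (v : Γ.V) (y z : Γ.sbQuiv.V) (C : Quiver.Path y y) (L : Quiver.Path y z)
      (h' : Γ.E × Bool),
    Γ.IsSgSpecial v ⟨y, C⟩ ∧ y.1.1 ∈ Γ.SpE ∧ Γ.vmap h' = v ∧ IsLiftOf L (Γ.specCyc h') ∧
    z ≠ y ∧ z.1.1 = y.1.1 ∧
    p = ⟨y, z, (Quiv.cpow C (Γ.mult v - 1)).comp L⟩}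

/-- The type III relations: the length-two paths not contained in any sg-special cycle,
except for the squares of loops at vertices of valency one and multiplicity `> 1`. -/
def sbMonoIII : Set (Quiv.SPath Γ.sbQuiv) :=
  {p | ∃ (α β : Γ.sbQuiv.A) (h : Γ.sbQuiv.tgt α = Γ.sbQuiv.src β),
    p = ⟨_, _, Quiv.relPath Γ.sbQuiv h⟩ ∧
    (¬ ∃ (v : Γ.V) (C : Quiv.SCycle Γ.sbQuiv), Γ.IsSgSpecial v C ∧
      [α, β] <:+: (Quiv.arrowsOf C.2 ++ Quiv.arrowsOf C.2)) ∧
    ¬ (α = β ∧ Γ.val (Γ.vmap α.1.1) = 1 ∧ 1 < Γ.mult (Γ.vmap α.1.1))}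

/-- The arrows at truncated vertices (valency one, multiplicity one) are zero. -/
def sbMonoTrunc : Set (Quiv.SPath Γ.sbQuiv) :=
  {p | ∃ h : Γ.E × Bool, Γ.mult (Γ.vmap h) * Γ.val (Γ.vmap h) = 1 ∧
    IsLiftOf p.2.2 (Quiv.arrPath Γ.bQuiv h)}

/-- The bound quiver presentation of the skew-Brauer graph algebra. -/
def sbPres : Pres where
  Q := Γ.sbQuiv
  fV := sgFintypeV Γ.bQuiv (inferInstanceAs (Fintype Γ.E)) Γ.SpE
  Gmono := Γ.sbMonoIIa ∪ Γ.sbMonoIIb ∪ Γ.sbMonoIII ∪ Γ.sbMonoTrunc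
  Gcomm := sgCommA Γ.bQuiv Γ.SpE ∪ Γ.sbCommI

/-- The skew-Brauer graph algebra of a skew-Brauer graph. -/
def sbAlg : Type := (Γ.sbPres).alg K

instance : Ring (Γ.sbAlg K) := inferInstanceAs (Ring ((Γ.sbPres).alg K))
instance : Algebra K (Γ.sbAlg K) := inferInstanceAs (Algebra K ((Γ.sbPres).alg K))

/-- The underlying graph is a tree (recall that the graph is connected by definition). -/
def IsTreeGraph : Prop := Fintype.card Γ.V = Fintype.card Γ.E + 1

/-- A skew-Brauer tree: the underlying graph is a tree, all multiplicities are one, and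
there is exactly one distinguished vertex. -/
def IsSkewBrauerTree : Prop :=
  Γ.IsTreeGraph ∧ (∀ v, Γ.mult v = 1) ∧ Γ.dist.ncard = 1

end SkewBrauerGraph

/-- Isomorphisms of skew-Brauer graphs. -/
structure SBIso (Γ Δ : SkewBrauerGraph) where
  eV : Γ.V ≃ Δ.V
  eH : (Γ.E × Bool) ≃ (Δ.E × Bool)
  flip : ∀ h, eH (h.1, !h.2) = ((eH h).1, !(eH h).2)
  hv : ∀ h, Δ.vmap (eH h) = eV (Γ.vmap h)
  hσ : ∀ h, Δ.σ (eH h) = eH (Γ.σ h)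
  hm : ∀ v, Δ.mult (eV v) = Γ.mult v
  hd : ∀ v, eV v ∈ Δ.dist ↔ v ∈ Γ.dist

/-- `B` is a Brauer graph algebra: the skew-Brauer graph algebra of a graph without
distinguished vertices. -/
def IsBrauerGraphAlgebra (B : Type) [Ring B] [Algebra K B] : Prop :=
  ∃ Δ : SkewBrauerGraph, Δ.dist = ∅ ∧ Nonempty (B ≃ₐ[K] Δ.sbAlg K)

/-- `B` is a Brauer tree algebra: the Brauer graph algebra of a tree with at most one
vertex of multiplicity `> 1`. -/
def IsBrauerTreeAlgebra (B : Type) [Ring B] [Algebra K B] : Prop :=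
  ∃ Δ : SkewBrauerGraph, Δ.dist = ∅ ∧ Δ.IsTreeGraph ∧
    {v : Δ.V | 1 < Δ.mult v}.ncard ≤ 1 ∧ Nonempty (B ≃ₐ[K] Δ.sbAlg K)
/-! ### Representation type, symmetric algebras, tilting -/

/-- A module is indecomposable if it is nonzero and its only idempotent endomorphisms
are `0` and `1`. -/
def IsIndecomposableMod (B : Type) [Ring B] (N : ModuleCat.{0} B) : Prop :=
  Nontrivial N ∧ ∀ e : N →ₗ[B] N, e.comp e = e → e = 0 ∨ e = LinearMap.id

/-- A ring is of finite representation type if it has finitely many finite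
indecomposable modules up to isomorphism. -/
def FiniteRepType (B : Type) [Ring B] : Prop :=
  ∃ (n : ℕ) (M : Fin n → ModuleCat.{0} B), ∀ N : ModuleCat.{0} B,
    IsIndecomposableMod B N → Module.Finite B N → ∃ i, Nonempty (N ≃ₗ[B] M i)

/-- A finite dimensional algebra is symmetric if it admits a linear form `φ` with
`φ(ab) = φ(ba)` whose kernel contains no nonzero one-sided ideal. -/
def IsSymmetricAlg (B : Type) [Ring B] [Algebra K B] : Prop :=
  ∃ φ : B →ₗ[K] K, (∀ a b : B, φ (a * b) = φ (b * a)) ∧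
    ∀ x : B, x ≠ 0 → ∃ y : B, φ (x * y) ≠ 0

/-- A tilting module (of projective dimension at most one): `pd T ≤ 1`, `Ext¹(T,T) = 0`
(every self-extension splits), and there is a coresolution `0 → B → T₀ → T₁ → 0` with
`T₀`, `T₁` direct summands of finite powers of `T`. -/
def IsTiltingModule (B : Type) [Ring B] (T : ModuleCat.{0} B) : Prop :=
  (∃ (P₁ P₀ : ModuleCat.{0} B), Module.Projective B P₁ ∧ Module.Projective B P₀ ∧
    ∃ (f : P₁ →ₗ[B] P₀) (g : P₀ →ₗ[B] T), Function.Injective f ∧ Function.Surjective g ∧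
      LinearMap.ker g = LinearMap.range f) ∧
  (∀ (E : ModuleCat.{0} B) (f : T →ₗ[B] E) (g : E →ₗ[B] T), Function.Injective f →
    Function.Surjective g → LinearMap.ker g = LinearMap.range f →
    ∃ s : T →ₗ[B] E, g.comp s = LinearMap.id) ∧
  (∃ (T₀ T₁ : ModuleCat.{0} B) (n₀ n₁ : ℕ)
    (i₀ : T₀ →ₗ[B] (Fin n₀ → T)) (r₀ : (Fin n₀ → T) →ₗ[B] T₀)
    (i₁ : T₁ →ₗ[B] (Fin n₁ → T)) (r₁ : (Fin n₁ → T) →ₗ[B] T₁),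
    r₀.comp i₀ = LinearMap.id ∧ r₁.comp i₁ = LinearMap.id ∧
    ∃ (u : B →ₗ[B] T₀) (w : T₀ →ₗ[B] T₁), Function.Injective u ∧ Function.Surjective w ∧
      LinearMap.ker w = LinearMap.range u)

/-- One tilting step between `K`-algebras: `C` is the endomorphism algebra of a
tilting module over `B`. -/
def TiltStep (B C : AlgCat.{0} K) : Prop :=
  ∃ T : ModuleCat.{0} B, IsTiltingModule ↥B T ∧
    letI : Module K ↥T := Module.compHom ↥T (algebraMap K ↥B)
    haveI : SMulCommClass ↥B K ↥T := ⟨fun b k t => by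
      change b • (algebraMap K ↥B k) • t = (algebraMap K ↥B k) • (b • t)
      rw [← mul_smul, ← mul_smul, Algebra.commutes]⟩
    haveI : IsScalarTower K ↥B ↥T := ⟨fun k b t => by
      change (k • b) • t = (algebraMap K ↥B k) • (b • t)
      rw [Algebra.smul_def, mul_smul]⟩
    Nonempty (↥C ≃ₐ[K] Module.End ↥B ↥T)

/-- The hereditary path algebra of a finite quiver (no relations). -/
def pathAlgebraOf (Q : Quiv) (fV : Fintype Q.V) : Type :=
  CAlgS K (∅ : Set (RawPathAlg K Q)) (@Finset.univ _ fV)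

instance (Q : Quiv) (fV : Fintype Q.V) : Ring (pathAlgebraOf K Q fV) :=
  inferInstanceAs (Ring (CAlgS K _ _))
instance (Q : Quiv) (fV : Fintype Q.V) : Algebra K (pathAlgebraOf K Q fV) :=
  inferInstanceAs (Algebra K (CAlgS K _ _))

/-- `A` is an iterated tilted algebra of a hereditary algebra whose quiver has the
given underlying shape. -/
def IsIteratedTiltedOf (shape : Quiv → Prop) (A : Type) [Ring A] [Algebra K A] : Prop :=
  ∃ (B₀ B₁ : AlgCat.{0} K) (Q : Quiv) (fV : Fintype Q.V) (_ : Fintype Q.A),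
    shape Q ∧ Nonempty (↥B₀ ≃ₐ[K] pathAlgebraOf K Q fV) ∧
    Relation.ReflTransGen (TiltStep K) B₀ B₁ ∧ Nonempty (↥B₁ ≃ₐ[K] A)

/-- The edges of the Dynkin diagram `D_n` on vertices `0, …, n-1`:
`{0,2}, {1,2}, {2,3}, …, {n-2, n-1}`. -/
def dPair (i : ℕ) : Finset ℕ :=
  if i = 0 then {0, 2} else if i = 1 then {1, 2} else {i, i + 1}

/-- The underlying graph of the quiver is the Dynkin diagram `D_n`, `n ≥ 4`. -/
def IsTypeD (Q : Quiv) : Prop :=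
  ∃ n, 4 ≤ n ∧ ∃ (eV : Q.V ≃ Fin n) (eA : Q.A ≃ Fin (n - 1)),
    ∀ a : Q.A, ({(eV (Q.src a) : ℕ), (eV (Q.tgt a) : ℕ)} : Finset ℕ) = dPair (eA a)

/-- The edges of the Dynkin diagram `E_n` on vertices `0, …, n-1`:
a path `0 — 1 — ⋯ — (n-2)` together with the edge `{2, n-1}`. -/
def ePair (n i : ℕ) : Finset ℕ := if i = n - 2 then {2, n - 1} else {i, i + 1}

/-- The underlying graph of the quiver is a Dynkin diagram `E₆`, `E₇` or `E₈`. -/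
def IsTypeE (Q : Quiv) : Prop :=
  ∃ n, (n = 6 ∨ n = 7 ∨ n = 8) ∧ ∃ (eV : Q.V ≃ Fin n) (eA : Q.A ≃ Fin (n - 1)),
    ∀ a : Q.A, ({(eV (Q.src a) : ℕ), (eV (Q.tgt a) : ℕ)} : Finset ℕ) = ePair n (eA a)

/-- A source of a quiver. -/
def Quiv.IsSource (Q : Quiv) (x : Q.V) : Prop := ∀ a : Q.A, Q.tgt a ≠ x

/-- A sink of a quiver. -/
def Quiv.IsSink (Q : Quiv) (x : Q.V) : Prop := ∀ a : Q.A, Q.src a ≠ x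
/-! ### The exceptional two-edge skew-Brauer graphs -/

/-- The vertex map of the path graph `0 — 1 — 2` with edges `0` (between `0` and `1`)
and `1` (between `1` and `2`). -/
def vmapPath2 : Fin 2 × Bool → Fin 3 := fun h =>
  if h = (0, false) then 0 else if h = (0, true) then 1 else if h = (1, false) then 1 else 2

/-- The cyclic orderings of the path graph `0 — 1 — 2`. -/
def sigmaPath2 : Equiv.Perm (Fin 2 × Bool) := Equiv.swap (0, true) (1, false)

lemma path2_conn : ∀ v w : Fin 3, Relation.ReflTransGen
    (fun a b => ∃ h : Fin 2 × Bool, vmapPath2 h = a ∧ vmapPath2 (h.1, !h.2) = b) v w := by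
  have h01 : ∃ h : Fin 2 × Bool, vmapPath2 h = 0 ∧ vmapPath2 (h.1, !h.2) = 1 :=
    ⟨(0, false), by decide, by decide⟩
  have h10 : ∃ h : Fin 2 × Bool, vmapPath2 h = 1 ∧ vmapPath2 (h.1, !h.2) = 0 :=
    ⟨(0, true), by decide, by decide⟩
  have h12 : ∃ h : Fin 2 × Bool, vmapPath2 h = 1 ∧ vmapPath2 (h.1, !h.2) = 2 :=
    ⟨(1, false), by decide, by decide⟩
  have h21 : ∃ h : Fin 2 × Bool, vmapPath2 h = 2 ∧ vmapPath2 (h.1, !h.2) = 1 :=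
    ⟨(1, true), by decide, by decide⟩
  intro v w
  fin_cases v <;> fin_cases w
  · exact .refl
  · exact .single h01
  · exact (Relation.ReflTransGen.single h01).tail h12
  · exact .single h10
  · exact .refl
  · exact .single h12
  · exact (Relation.ReflTransGen.single h21).tail h10
  · exact .single h21
  · exact .refl

lemma path2_trans : ∀ h h' : Fin 2 × Bool, vmapPath2 h = vmapPath2 h' →
    ∃ n : ℕ, (sigmaPath2 ^ n) h = h' := by
  have H : ∀ h h' : Fin 2 × Bool, vmapPath2 h = vmapPath2 h' →
      (sigmaPath2 ^ (if h = h' then 0 else 1)) h = h' := by decide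
  exact fun h h' hv => ⟨_, H h h' hv⟩

/-- The skew-Brauer graph `× — v — w` (one distinguished vertex) with multiplicity `mw`
at the extreme non-distinguished vertex `w`. -/
def SBG1 (mw : ℕ) (hw : 1 ≤ mw) : SkewBrauerGraph where
  V := Fin 3
  E := Fin 2
  fV := inferInstance
  fE := inferInstance
  neE := ⟨0⟩
  vmap := vmapPath2
  mult := ![1, 1, mw]
  mult_pos := by intro v; fin_cases v <;> simp [hw]
  σ := sigmaPath2
  σ_vmap := by decide
  σ_trans := path2_trans
  conn := path2_conn
  dist := {0}
  dist_mult := by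
    intro v hv
    simp only [Set.mem_singleton_iff] at hv
    subst hv
    rfl
  dist_val := by
    intro v hv
    simp only [Set.mem_singleton_iff] at hv
    subst hv
    exact ⟨(0, false), by decide, by decide⟩
  dist_adj := by
    intro v hv h hh
    simp only [Set.mem_singleton_iff] at hv ⊢
    subst hv
    revert hh
    revert h
    decide

/-- The skew-Brauer graph `× — v — ×` (two distinguished vertices) with multiplicity `mv`
at the middle vertex `v`. -/
def SBG2 (mv : ℕ) (hv : 1 ≤ mv) : SkewBrauerGraph where
  V := Fin 3
  E := Fin 2
  fV := inferInstance
  fE := inferInstance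
  neE := ⟨0⟩
  vmap := vmapPath2
  mult := ![1, mv, 1]
  mult_pos := by intro v; fin_cases v <;> simp [hv]
  σ := sigmaPath2
  σ_vmap := by decide
  σ_trans := path2_trans
  conn := path2_conn
  dist := {0, 2}
  dist_mult := by
    intro v hv'
    simp only [Set.mem_insert_iff, Set.mem_singleton_iff] at hv'
    rcases hv' with rfl | rfl <;> rfl
  dist_val := by
    intro v hv'
    simp only [Set.mem_insert_iff, Set.mem_singleton_iff] at hv'
    rcases hv' with rfl | rfl
    · exact ⟨(0, false), by decide, by decide⟩
    · exact ⟨(1, true), by decide, by decide⟩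
  dist_adj := by
    intro v hv' h hh
    simp only [Set.mem_insert_iff, Set.mem_singleton_iff] at hv' ⊢
    rcases hv' with rfl | rfl <;>
      · revert hh
        revert h
        decide
/-! ### Auxiliary notions for the main statements -/

/-- The embedding of the sg-quiver of a quiver into the sg-quiver of the quiver of the
trivial extension (the distinguished vertex sets agree). -/
def sgOldEmbT (P : Pres) (Sp : Set P.Q.V) :
    (sgQuiv P.Q Sp).V ⥤q (sgQuiv (trivQuiv K P) Sp).V where
  obj := fun v => ⟨v.1, v.2⟩
  map := fun e => ⟨⟨(Sum.inl e.1.1.1, e.1.1.2), e.1.2⟩,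
    Subtype.ext (congrArg Subtype.val e.2.1), Subtype.ext (congrArg Subtype.val e.2.2)⟩

/-- A cycle in the sg-quiver of the quiver of `T(A')` is an elementary cycle of
`T(A^sg)`: it decomposes as `q̂ ⬝ β̂` where `β̂` is a lift of a new arrow `β_p` and `q̂`
equals some lift `p̂` of the maximal path `p` in the algebra `A^sg`. -/
def IsElemCycleSg (SG : SkewGentlePres)
    (C : Quiv.SCycle (sgQuiv (trivQuiv K SG.auxPres) SG.Sp)) : Prop :=
  ∃ (p : MaxPathT K SG.auxPres) (x y : (sgQuiv SG.Qaux SG.Sp).V)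
    (qhat : Quiver.Path x y)
    (e : ((sgOldEmbT K SG.auxPres SG.Sp).obj y) ⟶ ((sgOldEmbT K SG.auxPres SG.Sp).obj x)),
    e.1.1.1 = Sum.inr (Quotient.mk (maxSetoid K SG.auxPres) p) ∧
    C = ⟨(sgOldEmbT K SG.auxPres SG.Sp).obj x,
      ((sgOldEmbT K SG.auxPres SG.Sp).mapPath qhat).cons e⟩ ∧
    ∃ phat : Quiver.Path x y, IsLiftOf phat p.1.2.2 ∧
      (SG.asgPres).pz K ⟨x, y, qhat⟩ = (SG.asgPres).pz K ⟨x, y, phat⟩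

/-- The presentation of the quotient of `T(A^sg)` (presented as the sg-bound quiver
algebra of the data of `T(A')`) by the good cut induced by a cut set `D'` of `T(A')`. -/
def goodCutPres (SG : SkewGentlePres) (D' : Set (trivQuiv K SG.auxPres).A) : Pres :=
  let base := sgPres (trivQuiv K SG.auxPres) SG.fV (trivGmono K SG.auxPres) SG.Sp
    {C | IsElemCycle K SG.auxPres C}
  ⟨base.Q, base.fV,
    base.Gmono ∪ {p | ∃ ahat : (sgQuiv (trivQuiv K SG.auxPres) SG.Sp).A,
      ahat.1.1 ∈ D' ∧ p = ⟨_, _, Quiv.arrPath (sgQuiv (trivQuiv K SG.auxPres) SG.Sp) ahat⟩},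
    base.Gcomm⟩

/-- The vertices of the quiver of a skew-gentle algebra that give rise to vertices of its
skew-Brauer graph via trivial paths. -/
def TrivVertex (SG : SkewGentlePres) (x : SG.Q.V) : Prop :=
  ({a : SG.Qaux.A | SG.Qaux.src a = x} ∪ {a : SG.Qaux.A | SG.Qaux.tgt a = x}).ncard = 1 ∨
  ((∃! a : SG.Qaux.A, SG.Qaux.tgt a = x) ∧ (∃! b : SG.Qaux.A, SG.Qaux.src b = x) ∧
    ∀ (a b : SG.Qaux.A) (h : SG.Q.tgt a.1 = SG.Q.src b.1),
      SG.Qaux.tgt a = x → SG.Qaux.src b = x →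
      SG.pres.pz K ⟨_, _, Quiv.relPath SG.Q h⟩ ≠ 0)

/-- Modified Brauer tree algebras (in the sense of Skowroński): symmetric algebras of
finite representation type such that in any bound quiver presentation with admissible
ideal every vertex is the start (resp. end) of exactly one or two arrows, and the quiver
contains exactly one loop. -/
def IsModifiedBrauerTreeAlgebra (B : Type) [Ring B] [Algebra K B] : Prop :=
  IsSymmetricAlg K B ∧ FiniteRepType B ∧
  ∀ P : Pres, P.Admissible K → Nonempty (B ≃ₐ[K] P.alg K) →
    ((∀ v : P.Q.V, {a : P.Q.A | P.Q.src a = v}.ncard = 1 ∨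
        {a : P.Q.A | P.Q.src a = v}.ncard = 2) ∧
     (∀ v : P.Q.V, {a : P.Q.A | P.Q.tgt a = v}.ncard = 1 ∨
        {a : P.Q.A | P.Q.tgt a = v}.ncard = 2) ∧
     {a : P.Q.A | P.Q.src a = P.Q.tgt a}.ncard = 1)

end

/-!
A lift of an elementary cycle `q β_p` of `T(A')` splits as `q̂ β̂` with `q̂` a lift of `q` to the
sg-quiver of `A'`; since `q = p` in `A'`, the path `q` is itself maximal and `q̂ β̂` is elementary
with `p̂ := q̂`.

Conversely it suffices to look at the lift of `C` through the copies of sign `false`. Its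
decomposition `q̂ β̂` comes with a lift `p̂` of a maximal path `p` such that `q̂ = p̂` in `A^sg`,
and this forces `q = p` in `A'`: sending the copy of signs `(ε, δ)` of an arrow `a` to the matrix
with `a` in the entry `(ε, δ)` defines a morphism from `A^sg` to `2 × 2` matrices over `A'`. Two
lifts of the same path through different copies of a special vertex have the same image, which
is why the commutativity relations of `A^sg` hold there.
-/

noncomputable section

variable (K : Type) [CommRing K]

section PathAlgebra

variable {Q : Quiv}

lemma vtx_src_mul_arrel (a : Q.A) : vtx K (Q.src a) * arrel K a = arrel K a :=
  (map_mul _ _ _).symm.trans (RingQuot.mkAlgHom_rel K (QRel.src a))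

lemma arrel_mul_vtx_tgt (a : Q.A) : arrel K a * vtx K (Q.tgt a) = arrel K a :=
  (map_mul _ _ _).symm.trans (RingQuot.mkAlgHom_rel K (QRel.tgt a))

lemma arrel_mul_vtx (v : Q.V) (a : Q.A) :
    arrel K a * vtx K v = if v = Q.tgt a then arrel K a else 0 := by
  split_ifs with h
  · rw [h, arrel_mul_vtx_tgt]
  · rw [← arrel_mul_vtx_tgt, mul_assoc, vtx_mul_orth K (Ne.symm h), mul_zero]

lemma vtx_mul_pElem (v : Q.V) {s t : Q.V} (p : Quiver.Path s t) :
    vtx K v * pElem K p = if v = s then pElem K p else 0 := by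
  induction p with
  | nil =>
    rw [pElem]
    split_ifs with h
    · rw [h]; exact vtx_mul_self K s
    · exact vtx_mul_orth K h
  | cons p e ih => simp only [pElem, ← mul_assoc, ih, ite_mul, zero_mul]

lemma pElem_mul_vtx (v : Q.V) {s t : Q.V} (p : Quiver.Path s t) :
    pElem K p * vtx K v = if v = t then pElem K p else 0 := by
  cases p with
  | nil =>
    rw [pElem]
    split_ifs with h
    · rw [h]; exact vtx_mul_self K s
    · exact vtx_mul_orth K (Ne.symm h)
  | cons p e =>
    obtain ⟨a, -, rfl⟩ := e
    simp only [pElem, mul_assoc, arrel_mul_vtx, mul_ite, mul_zero]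

lemma idemS_mul_toB_pElem (G : Set (RawPathAlg K Q)) {S : Finset Q.V} {s t : Q.V}
    (hs : s ∈ S) (p : Quiver.Path s t) :
    idemS K G S * toB K G (pElem K p) = toB K G (pElem K p) := by
  simp only [idemS, Finset.sum_mul, vtxB, ← map_mul, vtx_mul_pElem, apply_ite (toB K G),
    map_zero, Finset.sum_ite_eq', if_pos hs]

lemma toB_pElem_mul_idemS (G : Set (RawPathAlg K Q)) {S : Finset Q.V} {s t : Q.V}
    (ht : t ∈ S) (p : Quiver.Path s t) :
    toB K G (pElem K p) * idemS K G S = toB K G (pElem K p) := by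
  simp only [idemS, Finset.mul_sum, vtxB, ← map_mul, pElem_mul_vtx, apply_ite (toB K G),
    map_zero, Finset.sum_ite_eq', if_pos ht]

lemma toB_eq_zero {G : Set (RawPathAlg K Q)} {x : RawPathAlg K Q} (hx : x ∈ G) :
    toB K G x = 0 :=
  (RingQuot.mkAlgHom_rel K (s := fun x y => x ∈ G ∧ y = 0) ⟨hx, rfl⟩).trans (map_zero _)

end PathAlgebra

namespace Pres

variable (P : Pres)

lemma pz_val (p : Quiv.SPath P.Q) : (P.pz K p).1 = toB K (P.gens K) (pElem K p.2.2) := by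
  obtain ⟨s, t, p⟩ := p
  have hmem (v : P.Q.V) : v ∈ P.univV := @Finset.mem_univ _ P.fV v
  show idemS K _ _ * _ * idemS K _ _ = _
  rw [idemS_mul_toB_pElem K _ (hmem s), toB_pElem_mul_idemS K _ (hmem t)]

lemma pz_eq_pz_iff (p q : Quiv.SPath P.Q) :
    P.pz K p = P.pz K q ↔
      toB K (P.gens K) (pElem K p.2.2) = toB K (P.gens K) (pElem K q.2.2) := by
  rw [← pz_val, ← pz_val]
  exact Subtype.ext_iff

end Pres

lemma Quiver.Path.length_eq_of_heq {V : Type*} [Quiver V] {a b a' b' : V} {p : Quiver.Path a b}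
    {p' : Quiver.Path a' b'} (ha : a = a') (hb : b = b') (h : p ≍ p') :
    p.length = p'.length := by
  subst ha hb
  rw [eq_of_heq h]

section Lifts

variable {Q : Quiv} {Sp : Set Q.V}

lemma IsLiftOf.exists_eq_cons {u z : (sgQuiv Q Sp).V} {v m w : Q.V} {r : Quiver.Path u z}
    {s : Quiver.Path v m} {α : m ⟶ w} (h : IsLiftOf r (s.cons α)) :
    ∃ (m' : (sgQuiv Q Sp).V) (r₀ : Quiver.Path u m') (ahat : m' ⟶ z),
      r = r₀.cons ahat ∧ IsLiftOf r₀ s ∧ ahat.1.1.1 = α.1 := by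
  obtain ⟨rfl, rfl, h⟩ := h
  cases r with
  | nil => simpa using congrArg Quiver.Path.length (eq_of_heq h)
  | cons r₀ ahat =>
    rw [Prefunctor.mapPath_cons] at h
    injection eq_of_heq h with hm hc hr ha
    subst hm
    exact ⟨_, r₀, ahat, rfl, ⟨rfl, rfl, hr⟩, congrArg Subtype.val (eq_of_heq ha)⟩

variable (Sp) in
def sgFalse : Q.V ⥤q (sgQuiv Q Sp).V where
  obj v := ⟨(v, false), Or.inr rfl⟩
  map e := ⟨⟨(e.1, false, false), Or.inr rfl, Or.inr rfl⟩,
    Subtype.ext (Prod.ext e.2.1 rfl), Subtype.ext (Prod.ext e.2.2 rfl)⟩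

lemma isLiftOf_sgFalse_mapPath {v w : Q.V} (p : Quiver.Path v w) :
    IsLiftOf ((sgFalse Sp).mapPath p) p :=
  ⟨rfl, rfl, heq_of_eq <|
    (Prefunctor.mapPath_comp_apply _ _ p).symm.trans (Prefunctor.mapPath_id p)⟩

end Lifts

section OldEmb

variable (P : Pres) (Sp : Set P.Q.V)

lemma sgProj_mapPath_sgOldEmbT_mapPath {x y : (sgQuiv P.Q Sp).V} (qhat : Quiver.Path x y) :
    (sgProj (trivQuiv K P) Sp).mapPath ((sgOldEmbT K P Sp).mapPath qhat) =
      (oldEmb K P).mapPath ((sgProj P.Q Sp).mapPath qhat) :=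
  (Prefunctor.mapPath_comp_apply _ _ qhat).symm.trans
    (Prefunctor.mapPath_comp_apply (sgProj P.Q Sp) (oldEmb K P) qhat)

lemma IsLiftOf.exists_sgOldEmbT_mapPath {u m : (sgQuiv (trivQuiv K P) Sp).V} {a b : P.Q.V}
    {r : Quiver.Path u m} {q : Quiver.Path a b} (h : IsLiftOf r ((oldEmb K P).mapPath q)) :
    ∃ (x y : (sgQuiv P.Q Sp).V) (qhat : Quiver.Path x y),
      (⟨_, _, (sgOldEmbT K P Sp).mapPath qhat⟩ : Quiv.SPath _) = ⟨u, m, r⟩ ∧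
        IsLiftOf qhat q := by
  induction q generalizing m with
  | nil =>
    obtain ⟨rfl, hm, hr⟩ := h
    cases r with
    | nil => exact ⟨u, u, .nil, rfl, rfl, rfl, HEq.rfl⟩
    | cons r₀ ahat =>
      exact absurd (Quiver.Path.length_eq_of_heq rfl hm hr) (Nat.succ_ne_zero _)
  | cons q α ih =>
    obtain ⟨m', r₀, ahat, rfl, hlift₀, ha⟩ := IsLiftOf.exists_eq_cons h
    obtain ⟨x, y, qhat, hsig, hlift⟩ := ih hlift₀
    cases hsig
    obtain ⟨rfl, rfl, hq⟩ := hlift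
    cases eq_of_heq hq
    obtain rfl : (sgProj _ Sp).obj m = _ := h.2.1
    obtain ⟨⟨⟨c, ε, δ⟩, hmem⟩, hsrc, htgt⟩ := ahat
    obtain rfl : c = Sum.inl α.1 := ha
    exact ⟨x, m, qhat.cons ⟨⟨(α.1, ε, δ), hmem⟩, hsrc, htgt⟩, rfl, rfl, rfl, HEq.rfl⟩

end OldEmb

section SgMatrixRep

variable (Q : Quiv) (Sp : Set Q.V)

def sgMatrixGen : (sgQuiv Q Sp).V ⊕ (sgQuiv Q Sp).A → Matrix Bool Bool (RawPathAlg K Q)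
  | .inl v => Matrix.single v.1.2 v.1.2 (vtx K v.1.1)
  | .inr a => Matrix.single a.1.2.1 a.1.2.2 (arrel K a.1.1)

lemma sgMatrixGen_rel ⦃x y : FreeAlgebra K ((sgQuiv Q Sp).V ⊕ (sgQuiv Q Sp).A)⦄
    (h : QRel K (sgQuiv Q Sp) x y) :
    FreeAlgebra.lift K (sgMatrixGen K Q Sp) x = FreeAlgebra.lift K (sgMatrixGen K Q Sp) y := by
  cases h with
  | idem v =>
    simp only [map_mul, FreeAlgebra.lift_ι_apply, sgMatrixGen, Matrix.single_mul_single_same,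
      vtx_mul_self]
  | @orth v w hvw =>
    simp only [map_mul, map_zero, FreeAlgebra.lift_ι_apply, sgMatrixGen]
    by_cases hsign : v.1.2 = w.1.2
    · have hvtx : v.1.1 ≠ w.1.1 := fun h => hvw (Subtype.ext (Prod.ext h hsign))
      rw [hsign, Matrix.single_mul_single_same, vtx_mul_orth K hvtx, Matrix.single_zero]
    · exact Matrix.single_mul_single_of_ne _ _ _ _ hsign _
  | src a =>
    simp only [map_mul, FreeAlgebra.lift_ι_apply, sgMatrixGen]
    exact (Matrix.single_mul_single_same _ _ _ _ _).trans
      (congrArg _ (vtx_src_mul_arrel K a.1.1))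
  | tgt a =>
    simp only [map_mul, FreeAlgebra.lift_ι_apply, sgMatrixGen]
    exact (Matrix.single_mul_single_same _ _ _ _ _).trans
      (congrArg _ (arrel_mul_vtx_tgt K a.1.1))

def sgMatrixRep : RawPathAlg K (sgQuiv Q Sp) →ₐ[K] Matrix Bool Bool (RawPathAlg K Q) :=
  RingQuot.liftAlgHom K ⟨FreeAlgebra.lift K (sgMatrixGen K Q Sp), sgMatrixGen_rel K Q Sp⟩

lemma sgMatrixRep_vtx (v : (sgQuiv Q Sp).V) :
    sgMatrixRep K Q Sp (vtx K v) = Matrix.single v.1.2 v.1.2 (vtx K v.1.1) :=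
  (RingQuot.liftAlgHom_mkAlgHom_apply K _ _ _).trans (FreeAlgebra.lift_ι_apply _ _)

lemma sgMatrixRep_arrel (a : (sgQuiv Q Sp).A) :
    sgMatrixRep K Q Sp (arrel K a) = Matrix.single a.1.2.1 a.1.2.2 (arrel K a.1.1) :=
  (RingQuot.liftAlgHom_mkAlgHom_apply K _ _ _).trans (FreeAlgebra.lift_ι_apply _ _)

lemma sgMatrixRep_pElem {x y : (sgQuiv Q Sp).V} (r : Quiver.Path x y) :
    sgMatrixRep K Q Sp (pElem K r) =
      Matrix.single x.1.2 y.1.2 (pElem K ((sgProj Q Sp).mapPath r)) := by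
  induction r with
  | nil =>
    rw [Prefunctor.mapPath_nil, pElem, pElem]
    exact sgMatrixRep_vtx K Q Sp x
  | cons r e ih =>
    obtain ⟨a, rfl, rfl⟩ := e
    rw [pElem, map_mul, ih, sgMatrixRep_arrel, Prefunctor.mapPath_cons, pElem]
    exact Matrix.single_mul_single_same _ _ _ _ _

end SgMatrixRep

section SgMatrixRepBound

variable (P : Pres) (Sp : Set P.Q.V)

lemma mapMatrix_toB_sgMatrixRep_pElem {x y : (sgQuiv P.Q Sp).V} (r : Quiver.Path x y) :
    (toB K (P.gens K)).mapMatrix (sgMatrixRep K P.Q Sp (pElem K r)) =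
      Matrix.single x.1.2 y.1.2 (toB K (P.gens K) (pElem K ((sgProj P.Q Sp).mapPath r))) := by
  rw [sgMatrixRep_pElem, AlgHom.mapMatrix_apply, Matrix.map_single]

lemma mapMatrix_toB_sgMatrixRep_pElem_of_isLiftOf {x y : (sgQuiv P.Q Sp).V} {r : Quiver.Path x y}
    {v w : P.Q.V} {p : Quiver.Path v w} (h : IsLiftOf r p) :
    (toB K (P.gens K)).mapMatrix (sgMatrixRep K P.Q Sp (pElem K r)) =
      Matrix.single x.1.2 y.1.2 (toB K (P.gens K) (pElem K p)) := by
  obtain ⟨rfl, rfl, h⟩ := h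
  rw [mapMatrix_toB_sgMatrixRep_pElem, eq_of_heq h]

lemma mapMatrix_toB_sgMatrixRep_eq_zero_of_mem_gens {x : RawPathAlg K (sgQuiv P.Q Sp)}
    (hx : x ∈ (sgPres P.Q P.fV P.Gmono Sp ∅).gens K) :
    (toB K (P.gens K)).mapMatrix (sgMatrixRep K P.Q Sp x) = 0 := by
  change x ∈ gensOf K (sgMonoC P.Q Sp P.Gmono ∪ sgMonoD P.Q Sp ∅)
    (sgCommA P.Q Sp ∪ sgCommB P.Q Sp ∅) at hx
  rcases hx with ⟨⟨x, y, r⟩, ⟨p, hp, hlift⟩ | ⟨C, hC, -⟩, rfl⟩ |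
    ⟨⟨⟨x, y, r₁⟩, ⟨x', y', r₂⟩⟩, ⟨a, b, hab, -, hsrc, htgt, -, hlift₁, hlift₂⟩ | ⟨C, hC, -⟩, rfl⟩
  · rw [mapMatrix_toB_sgMatrixRep_pElem_of_isLiftOf K P Sp hlift,
      toB_eq_zero K (Or.inl ⟨p, hp, rfl⟩), Matrix.single_zero]
  · exact absurd hC (Set.notMem_empty C)
  · dsimp only at hsrc htgt
    subst hsrc htgt
    rw [map_sub, map_sub, mapMatrix_toB_sgMatrixRep_pElem_of_isLiftOf K P Sp hlift₁,
      mapMatrix_toB_sgMatrixRep_pElem_of_isLiftOf K P Sp hlift₂, sub_self]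
  · exact absurd hC (Set.notMem_empty C)

def sgMatrixRepBound :
    RawBound K (sgPres P.Q P.fV P.Gmono Sp ∅).Q ((sgPres P.Q P.fV P.Gmono Sp ∅).gens K) →ₐ[K]
      Matrix Bool Bool (RawBound K P.Q (P.gens K)) :=
  RingQuot.liftAlgHom K ⟨(toB K (P.gens K)).mapMatrix.comp (sgMatrixRep K P.Q Sp), by
    rintro x _ ⟨hx, rfl⟩
    exact (mapMatrix_toB_sgMatrixRep_eq_zero_of_mem_gens K P Sp hx).trans (map_zero _).symm⟩

lemma sgMatrixRepBound_toB_pElem {x y : (sgQuiv P.Q Sp).V} (r : Quiver.Path x y) :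
    sgMatrixRepBound K P Sp (toB K _ (pElem K r)) =
      Matrix.single x.1.2 y.1.2 (toB K (P.gens K) (pElem K ((sgProj P.Q Sp).mapPath r))) :=
  (RingQuot.liftAlgHom_mkAlgHom_apply K _ _ _).trans (mapMatrix_toB_sgMatrixRep_pElem K P Sp r)

theorem Pres.pz_sgProj_eq_of_sgPres_pz_eq {x y : (sgQuiv P.Q Sp).V} {q p : Quiver.Path x y}
    (h : (sgPres P.Q P.fV P.Gmono Sp ∅).pz K ⟨x, y, q⟩ =
      (sgPres P.Q P.fV P.Gmono Sp ∅).pz K ⟨x, y, p⟩) :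
    P.pz K ⟨_, _, (sgProj P.Q Sp).mapPath q⟩ = P.pz K ⟨_, _, (sgProj P.Q Sp).mapPath p⟩ := by
  have hmat := (sgMatrixRepBound_toB_pElem K P Sp q).symm.trans <|
    (congrArg (sgMatrixRepBound K P Sp) ((Pres.pz_eq_pz_iff K _ _ _).mp h)).trans
      (sgMatrixRepBound_toB_pElem K P Sp p)
  refine (Pres.pz_eq_pz_iff K P _ _).mpr ?_
  simpa using congrFun (congrFun hmat x.1.2) y.1.2

end SgMatrixRepBound

lemma Pres.IsMaximal.of_pz_eq {P : Pres} {p q : Quiv.SPath P.Q} (hp : P.IsMaximal K p)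
    (h : P.pz K q = P.pz K p) : P.IsMaximal K q := by
  unfold Pres.IsMaximal
  rwa [h]

section ElementaryCycles

variable {K} {SG : SkewGentlePres}

theorem IsElemCycle.isElemCycleSg_of_isLiftOf {C : Quiv.SCycle (trivQuiv K SG.auxPres)}
    (hC : IsElemCycle K SG.auxPres C)
    {Chat : Quiv.SCycle (sgQuiv (trivQuiv K SG.auxPres) SG.Sp)} (hlift : IsLiftOf Chat.2 C.2) :
    IsElemCycleSg K SG Chat := by
  obtain ⟨p, q, hq, rfl⟩ := hC
  obtain ⟨c, r⟩ := Chat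
  dsimp only at hlift
  obtain ⟨m, r₀, ahat, rfl, hlift₀, hahat⟩ := IsLiftOf.exists_eq_cons hlift
  obtain ⟨x, y, qhat, hsig, hliftq⟩ := hlift₀.exists_sgOldEmbT_mapPath
  cases hsig
  refine ⟨⟨_, p.2.of_pz_eq K hq⟩, x, y, qhat, ahat, ?_, rfl, qhat, hliftq, rfl⟩
  rw [hahat]
  exact congrArg Sum.inr (Quotient.sound ⟨rfl, rfl, hq.symm⟩)

theorem IsElemCycleSg.isElemCycle_of_isLiftOf
    {Chat : Quiv.SCycle (sgQuiv (trivQuiv K SG.auxPres) SG.Sp)} (hChat : IsElemCycleSg K SG Chat)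
    {C : Quiv.SCycle (trivQuiv K SG.auxPres)} (hlift : IsLiftOf Chat.2 C.2) :
    IsElemCycle K SG.auxPres C := by
  obtain ⟨⟨⟨s, t, pmax⟩, hmax⟩, x, y, qhat, e, he, rfl, phat, hliftp, hpz⟩ := hChat
  obtain ⟨c, r⟩ := C
  dsimp only at hlift
  obtain ⟨rfl, -, hr⟩ := hlift
  cases eq_of_heq hr
  obtain ⟨rfl, rfl, hphat⟩ := hliftp
  cases eq_of_heq hphat
  refine ⟨⟨_, hmax⟩, (sgProj SG.Qaux SG.Sp).mapPath qhat,
    Pres.pz_sgProj_eq_of_sgPres_pz_eq K SG.auxPres SG.Sp hpz, ?_⟩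
  rw [Prefunctor.mapPath_cons]
  erw [sgProj_mapPath_sgOldEmbT_mapPath]
  congr 2
  exact Subtype.ext he

end ElementaryCycles

end

theorem elementary_cycles_lift_general
    (K : Type) [Field K]
    (SG : SkewGentlePres) (C : Quiv.SCycle (trivQuiv K SG.auxPres)) :
    IsElemCycle K SG.auxPres C ↔
      ∀ Chat : Quiv.SCycle (sgQuiv (trivQuiv K SG.auxPres) SG.Sp),
        IsLiftOf Chat.2 C.2 → IsElemCycleSg K SG Chat := by
  refine ⟨fun hC _ hlift => hC.isElemCycleSg_of_isLiftOf hlift, fun h => ?_⟩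
  have hlift := isLiftOf_sgFalse_mapPath (Q := trivQuiv K SG.auxPres) (Sp := SG.Sp) C.2
  exact (h ⟨_, _⟩ hlift).isElemCycle_of_isLiftOf hlift

/-- Lemma 3.5: a cycle `C` of `T(A')` is elementary if and only if every
induced cycle `ᵋCᵋ` in the sg-quiver of the quiver of `T(A')` is an elementary cycle of
`T(A^sg)`. -/
theorem elementary_cycles_lift
    (K : Type) [Field K] [IsAlgClosed K] (hK : ringChar K ≠ 2)
    (SG : SkewGentlePres) (C : Quiv.SCycle (trivQuiv K SG.auxPres)) :
    IsElemCycle K SG.auxPres C ↔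
      ∀ Chat : Quiv.SCycle (sgQuiv (trivQuiv K SG.auxPres) SG.Sp),
        IsLiftOf Chat.2 C.2 → IsElemCycleSg K SG Chat :=
  elementary_cycles_lift_general K SG C
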